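/- arXiv:1102.3527 — 6 statements merged into one kernel-verified Lean document; each statement's English description precedes it below -/
import Mathlib

section
/- Let φ be a Boolean formula in 3-CNF with n variables and m clauses, and construct matrices B_1, ..., B_m over GF(2), each 3 × (n+1), where for clause i the j-th row has a 1 in position k if the j-th literal is x_k, and 1s in positions k and n+1 if the j-th literal is ¬x_k. Let B_{m+1} = [0 ... 0 1]. Then φ is satisfiable if and only if there exists a vector c ∈ GF(2)^{n+1} such that B_i cᵀ ≠ 0 for all i = 1, ..., m+1. -/
/-- A literal over variables `x_1, …, x_n`: a variable index and a negation flag. -/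
structure Lit (n : ℕ) where
  var : Fin n
  neg : Bool

/-- The row of `GF(2)^{n+1}` encoding a literal: `e_k` for `x_k`,
and `e_k + e_{n+1}` for `¬x_k`. -/
def litRow {n : ℕ} (l : Lit n) : Fin (n + 1) → ZMod 2 :=
  (fun j => if j = l.var.castSucc then 1 else 0) +
  (fun j => if l.neg = true ∧ j = Fin.last n then 1 else 0)

/-- The `3 × (n+1)` matrix `B_i` over `GF(2)` encoding a 3-literal clause. -/
def clauseMatrix {n : ℕ} (cl : Fin 3 → Lit n) : Matrix (Fin 3) (Fin (n + 1)) (ZMod 2) :=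
  Matrix.of fun j k => litRow (cl j) k

/-- The `1 × (n+1)` matrix `B_{m+1} = [0 … 0 1]`. -/
def lastMatrix (n : ℕ) : Matrix (Fin 1) (Fin (n + 1)) (ZMod 2) :=
  Matrix.of fun _ k => if k = Fin.last n then 1 else 0

/-- An assignment satisfies a literal iff the variable's value differs from the negation flag. -/
def litSat {n : ℕ} (a : Fin n → Bool) (l : Lit n) : Prop := a l.var ≠ l.neg

lemma zmod2_cases : ∀ x : ZMod 2, x = 0 ∨ x = 1 := by decide

lemma clause_entry {n : ℕ} (cl : Fin 3 → Lit n) (c : Fin (n+1) → ZMod 2) (j : Fin 3) :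
    (clauseMatrix cl).mulVec c j
      = c (cl j).var.castSucc + (if (cl j).neg then c (Fin.last n) else 0) := by
  unfold clauseMatrix Matrix.mulVec dotProduct litRow
  simp only [Matrix.of_apply, Pi.add_apply, add_mul, ite_mul, one_mul, zero_mul,
    Finset.sum_add_distrib, Finset.sum_ite_eq, Finset.mem_univ, if_true]
  congr 1
  · simp [Finset.sum_ite_eq']
  · cases h : (cl j).neg <;> simp [h]

lemma last_entry {n : ℕ} (c : Fin (n+1) → ZMod 2) (j : Fin 1) :
    (lastMatrix n).mulVec c j = c (Fin.last n) := by
  unfold lastMatrix Matrix.mulVec dotProduct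
  simp [ite_mul]

theorem stmt_9 {n m : ℕ} (φ : Fin m → Fin 3 → Lit n) :
    (∃ a : Fin n → Bool, ∀ i, ∃ j, litSat a (φ i j)) ↔
    (∃ c : Fin (n + 1) → ZMod 2,
      (∀ i, (clauseMatrix (φ i)).mulVec c ≠ 0) ∧ (lastMatrix n).mulVec c ≠ 0) := by
  constructor
  · rintro ⟨a, ha⟩
    refine ⟨fun k => if h : k = Fin.last n then 1 else if a (k.castPred h) then 1 else 0, ?_, ?_⟩
    · intro i hz
      obtain ⟨j, hj⟩ := ha i
      have := congrFun hz j
      rw [clause_entry] at this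
      have hv : (φ i j).var.castSucc ≠ Fin.last n := Fin.castSucc_lt_last _ |>.ne
      simp only [dif_neg hv, Fin.castPred_castSucc, dif_pos rfl, Pi.zero_apply] at this
      unfold litSat at hj
      cases hneg : (φ i j).neg <;> cases hav : a (φ i j).var <;>
        simp [hneg, hav] at this hj
    · intro hz
      have := congrFun hz 0
      rw [last_entry] at this
      simp at this
  · rintro ⟨c, hc, hlast⟩
    have hcl : c (Fin.last n) = 1 := by
      rcases zmod2_cases (c (Fin.last n)) with h | h
      · exact absurd (funext fun j => by rw [last_entry, h]; rfl) hlast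
      · exact h
    refine ⟨fun v => c v.castSucc = 1, fun i => ?_⟩
    obtain ⟨j, hj⟩ := Function.ne_iff.mp (hc i)
    refine ⟨j, ?_⟩
    rw [clause_entry, hcl] at hj
    unfold litSat
    rcases zmod2_cases (c (φ i j).var.castSucc) with h | h <;>
        cases hneg : (φ i j).neg
    · simp [hneg, h] at hj
    · simp only [hneg, h]
      decide
    · simp only [hneg, h]
      decide
    · simp only [h, hneg, Pi.zero_apply] at hj
      exact (hj (by decide)).elim
end

section
/- Let φ be a 3-CNF clause with literals over x_1, ..., x_n, let c ∈ GF(2)^{n+1} with c_{n+1} = 1, and let B be the 3 × (n+1) matrix encoding the clause as above. Then B cᵀ ≠ 0 if and only if the truth assignment x_k := (c_k = 1) satisfies the clause. -/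
lemma mulVec_row {n : ℕ} (cl : Fin 3 → Lit n) (c : Fin (n + 1) → ZMod 2) (j : Fin 3) :
    (clauseMatrix cl).mulVec c j
      = c (cl j).var.castSucc + (if (cl j).neg = true then c (Fin.last n) else 0) := by
  classical
  unfold clauseMatrix litRow Matrix.mulVec dotProduct
  simp only [Matrix.of_apply, Pi.add_apply, add_mul, ite_mul, one_mul, zero_mul]
  rw [Finset.sum_add_distrib]
  congr 1
  · rw [Finset.sum_ite_eq' Finset.univ ((cl j).var.castSucc)]
    simp
  · by_cases h : (cl j).neg = true
    · simp [h, Finset.sum_ite_eq' Finset.univ (Fin.last n)]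
    · simp [h]

theorem stmt_11 {n : ℕ} (cl : Fin 3 → Lit n) (c : Fin (n + 1) → ZMod 2)
    (hc : c (Fin.last n) = 1) :
    (clauseMatrix cl).mulVec c ≠ 0 ↔
      ∃ j, litSat (fun k => c k.castSucc = 1) (cl j) := by
  rw [Function.ne_iff]
  apply exists_congr
  intro j
  rw [mulVec_row cl c j, hc]
  simp only [litSat, Pi.zero_apply, ne_eq]
  have h2 : ∀ x : ZMod 2, x = 0 ∨ x = 1 := by decide
  rcases h2 (c (cl j).var.castSucc) with h | h <;>
    cases hn : (cl j).neg <;> simp [h, hn] <;> decide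
end

section
/- Let V_1, ..., V_K be subspaces of GF(q)^N with dim V_k = r_k < N for all k, and suppose q ≥ K. Then there exists a vector x ∈ GF(q)^N with at most K nonzero components such that x ∉ V_k for every k. -/
/-!
For each `k` some standard basis vector `e_{j k}` lies outside `V k`, since otherwise `V k`
would be everything. Restricted to the subspace `W` of vectors supported on the at most `K`
coordinates `j k`, the `V k` remain proper subspaces, and a vector space over `F` is not a
union of `K ≤ |F|` proper subspaces: given `x` avoiding all but one of them, `p`, with `x ∈ p`,
and `y ∉ p`, each of the other subspaces meets the line `y + F • x` at most once, so some point
of it avoids all.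
-/

open Set

section Avoidance

variable {k E ι : Type*} [DivisionRing k] [AddCommGroup E] [Module k E]

theorem Submodule.eq_of_add_smul_mem {p : Submodule k E} {x y : E} (hx : x ∉ p) {a b : k}
    (ha : y + a • x ∈ p) (hb : y + b • x ∈ p) : a = b := by
  by_contra hab
  have : (a - b) • x ∈ p := by simpa [sub_smul] using p.sub_mem ha hb
  exact hx ((p.smul_mem_iff (sub_ne_zero.mpr hab)).mp this)

theorem Submodule.exists_add_smul_forall_notMem [Fintype k] {p : ι → Submodule k E}
    {s : Finset ι} (hs : s.card < Fintype.card k) {x : E} (hx : ∀ i ∈ s, x ∉ p i) (y : E) :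
    ∃ c : k, ∀ i ∈ s, y + c • x ∉ p i := by
  by_contra! hcover
  choose f hfs hf using hcover
  obtain ⟨a, -, b, -, hab, hfab⟩ :=
    Finset.exists_ne_map_eq_of_card_lt_of_maps_to (s := Finset.univ) hs
      (fun c _ => hfs c)
  exact hab (Submodule.eq_of_add_smul_mem (hx _ (hfs b)) (hfab ▸ hf a) (hf b))

theorem Submodule.exists_forall_notMem_of_card_le [Fintype k] (p : ι → Submodule k E)
    (s : Finset ι) (hs : s.card ≤ Fintype.card k) (hp : ∀ i ∈ s, p i ≠ ⊤) :
    ∃ x : E, ∀ i ∈ s, x ∉ p i := by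
  classical
  induction s using Finset.induction_on with
  | empty => exact ⟨0, by simp⟩
  | insert a s ha ih =>
    rw [Finset.card_insert_of_notMem ha] at hs
    obtain ⟨x, hx⟩ := ih (by omega) fun i hi => hp i (Finset.mem_insert_of_mem hi)
    by_cases hxa : x ∈ p a
    · obtain ⟨y, -, hya⟩ :=
        SetLike.exists_of_lt (lt_top_iff_ne_top.mpr (hp a (Finset.mem_insert_self a s)))
      obtain ⟨c, hc⟩ := Submodule.exists_add_smul_forall_notMem (by omega) hx y
      refine ⟨y + c • x, Finset.forall_mem_insert _ _ _ |>.mpr ⟨fun h => hya ?_, hc⟩⟩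
      simpa using (p a).sub_mem h ((p a).smul_mem c hxa)
    · exact ⟨x, Finset.forall_mem_insert _ _ _ |>.mpr ⟨hxa, hx⟩⟩

end Avoidance

theorem Submodule.exists_single_notMem_of_finrank_lt {R ι : Type*} [Ring R]
    [StrongRankCondition R] [Fintype ι] [DecidableEq ι] (p : Submodule R (ι → R))
    (hp : Module.finrank R p < Fintype.card ι) : ∃ i, Pi.single i 1 ∉ p := by
  by_contra! hsingle
  have htop : p = ⊤ := by
    rw [eq_top_iff, ← (Pi.basisFun R ι).span_eq, Submodule.span_le]
    rintro _ ⟨i, rfl⟩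
    simpa using hsingle i
  rw [htop, finrank_top, Module.finrank_fintype_fun_eq_card] at hp
  exact lt_irrefl _ hp

theorem Submodule.mem_pi_compl_bot_iff {R ι : Type*} [Semiring R] {S : Set ι} {x : ι → R} :
    x ∈ Submodule.pi Sᶜ (fun _ => (⊥ : Submodule R R)) ↔ {i | x i ≠ 0} ⊆ S := by
  simp only [Submodule.mem_pi, Submodule.mem_bot, Set.mem_compl_iff]
  exact ⟨fun h i hi => by_contra fun hS => hi (h i hS), fun h i hS => by_contra fun hi => hS (h hi)⟩

theorem stmt_12 {F : Type*} [Field F] [Fintype F] {N K : ℕ}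
    (V : Fin K → Submodule F (Fin N → F))
    (hdim : ∀ k, Module.finrank F (V k) < N)
    (hq : K ≤ Fintype.card F) :
    ∃ x : Fin N → F, Set.ncard {i | x i ≠ 0} ≤ K ∧ ∀ k, x ∉ V k := by
  choose j hj using fun k =>
    (V k).exists_single_notMem_of_finrank_lt (by simpa using hdim k)
  set W : Submodule F (Fin N → F) := Submodule.pi (range j)ᶜ fun _ => ⊥
  have hsingle : ∀ k, Pi.single (j k) 1 ∈ W := fun k =>
    Submodule.mem_pi_compl_bot_iff.mpr fun i hi =>
      ⟨k, by_contra fun h => hi (Pi.single_eq_of_ne (Ne.symm h) 1)⟩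
  have hW : ∀ k, (V k).comap W.subtype ≠ ⊤ := fun k hk =>
    hj k (Submodule.comap_subtype_eq_top.mp hk (hsingle k))
  obtain ⟨⟨x, hxW⟩, hx⟩ := Submodule.exists_forall_notMem_of_card_le
    (fun k => (V k).comap W.subtype) Finset.univ (by simpa using hq) fun k _ => hW k
  refine ⟨x, ?_, fun k => hx k (Finset.mem_univ k)⟩
  calc {i | x i ≠ 0}.ncard ≤ (range j).ncard :=
        Set.ncard_le_ncard (Submodule.mem_pi_compl_bot_iff.mp hxW) (Set.finite_range j)
    _ ≤ K := by
        rw [← Set.image_univ]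
        exact (Set.ncard_image_le Set.finite_univ).trans (by simp)
end

section
/- Bareiss identity: Let M be an n × n matrix over an integral domain and suppose all leading principal minors M[1..k, 1..k] have nonzero determinant for k < n. Define M^{(0)} = M and iteratively m^{(k)}_{ij} = (m^{(k-1)}_{kk} m^{(k-1)}_{ij} − m^{(k-1)}_{ik} m^{(k-1)}_{kj}) / m^{(k-2)}_{k-1,k-1} for i, j > k (with m^{(−1)}_{00} = 1). Then every such division is exact in the domain, and the final entry m^{(n-1)}_{nn} equals det(M). -/
/-!
By Sylvester's identity the Bareiss entry `m^{(k)}_{ij}` is the minor of `M` on rows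
`1, …, k, i` and columns `1, …, k, j`. The recursion is then the Desnanot–Jacobi identity for
that bordered minor, which comes from Jacobi's theorem on complementary minors: for
`A = [[P, *], [*, *]]` with a `2 × 2` lower-right block, the `2 × 2` block of `adjugate A` has
determinant `det P * det A` (proved for the generic matrix, where `det A` can be cancelled, and
then specialised). Its quotient being a minor, every division is exact.
-/

open Matrix

namespace Fin

theorem snoc_val_self (k : ℕ) :
    (snoc (val : Fin k → ℕ) k : Fin (k + 1) → ℕ) = val := by
  funext t
  induction t using lastCases <;> simp

theorem snoc_snoc_comp_succAbove {α : Type*} {m : ℕ} (u : Fin m → α) (a b : α) :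
    (snoc (snoc u a : Fin (m + 1) → α) b : Fin (m + 2) → α) ∘ (last m).castSucc.succAbove
      = snoc u b := by
  funext t
  induction t using lastCases with
  | last => simp
  | cast t => simp [succAbove_of_castSucc_lt, castSucc_lt_castSucc_iff]

end Fin

namespace Matrix

variable {R : Type*} [CommRing R] {ι κ : Type*} [Fintype ι] [Fintype κ] [DecidableEq ι]
  [DecidableEq κ]

theorem det_mul_det_submatrix_adjugate_inr (A : Matrix (ι ⊕ κ) (ι ⊕ κ) R) :
    A.det * ((adjugate A).submatrix Sum.inr Sum.inr).det
      = (A.submatrix Sum.inl Sum.inl).det * A.det ^ Fintype.card κ := by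
  set D : Matrix (ι ⊕ κ) (ι ⊕ κ) R :=
    fromBlocks 1 ((adjugate A).submatrix Sum.inl Sum.inr) 0
      ((adjugate A).submatrix Sum.inr Sum.inr)
  have hAD : A * D = fromBlocks (A.submatrix Sum.inl Sum.inl) 0 (A.submatrix Sum.inr Sum.inl)
      (A.det • 1) := by
    have hcol : ∀ r y, D r (Sum.inr y) = adjugate A r (Sum.inr y) := by
      rintro (_ | _) _ <;> rfl
    ext p (t | y)
    · rcases p with _ | _ <;> simp [D, Matrix.mul_apply, Fintype.sum_sum_type, Matrix.one_apply]
    · have := congrFun (congrFun (mul_adjugate A) p) (Sum.inr y)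
      simp only [Matrix.mul_apply, hcol] at this ⊢
      rw [this]
      rcases p with _ | _ <;> simp [Matrix.one_apply]
  calc A.det * ((adjugate A).submatrix Sum.inr Sum.inr).det = (A * D).det := by
        rw [det_mul, det_fromBlocks_zero₂₁, det_one, one_mul]
    _ = _ := by rw [hAD, det_fromBlocks_zero₁₂, det_smul, det_one, mul_one]

theorem det_submatrix_adjugate_inr [Nonempty κ] (A : Matrix (ι ⊕ κ) (ι ⊕ κ) R) :
    ((adjugate A).submatrix Sum.inr Sum.inr).det
      = (A.submatrix Sum.inl Sum.inl).det * A.det ^ (Fintype.card κ - 1) := by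
  suffices h :
      ((adjugate (mvPolynomialX (ι ⊕ κ) (ι ⊕ κ) ℤ)).submatrix Sum.inr Sum.inr).det
        = ((mvPolynomialX (ι ⊕ κ) (ι ⊕ κ) ℤ).submatrix Sum.inl Sum.inl).det
          * (mvPolynomialX (ι ⊕ κ) (ι ⊕ κ) ℤ).det ^ (Fintype.card κ - 1) by
    have := congrArg (MvPolynomial.aeval fun p => A p.1 p.2) h
    rw [← mvPolynomialX_mapMatrix_aeval ℤ A, ← AlgHom.map_adjugate]
    simpa only [map_mul, map_pow, AlgHom.map_det, AlgHom.mapMatrix_apply, submatrix_map]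
      using this
  apply mul_left_cancel₀ (det_mvPolynomialX_ne_zero (ι ⊕ κ) ℤ)
  rw [det_mul_det_submatrix_adjugate_inr, mul_left_comm, ← pow_succ',
    Nat.sub_one_add_one Fintype.card_ne_zero]

theorem det_mul_det_submatrix_castSucc_castSucc {m : ℕ}
    (B : Matrix (Fin (m + 2)) (Fin (m + 2)) R) :
    B.det * (B.submatrix (Fin.castSucc ∘ Fin.castSucc) (Fin.castSucc ∘ Fin.castSucc)).det
      = (B.submatrix Fin.castSucc Fin.castSucc).det
          * (B.submatrix (Fin.last m).castSucc.succAbove (Fin.last m).castSucc.succAbove).det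
        - (B.submatrix Fin.castSucc (Fin.last m).castSucc.succAbove).det
          * (B.submatrix (Fin.last m).castSucc.succAbove Fin.castSucc).det := by
  have h := det_submatrix_adjugate_inr (B.submatrix finSumFinEquiv finSumFinEquiv)
  rw [adjugate_submatrix_equiv_self, det_submatrix_equiv_self, submatrix_submatrix,
    submatrix_submatrix, det_fin_two] at h
  have hinl :
      (finSumFinEquiv ∘ Sum.inl : Fin m → Fin (m + 2)) = Fin.castSucc ∘ Fin.castSucc := by
    funext t; ext; simp
  have h0 : Fin.natAdd m (0 : Fin 2) = (Fin.last m).castSucc := by ext; simp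
  have h1 : Fin.natAdd m (1 : Fin 2) = Fin.last (m + 1) := by ext; simp
  have heven (a : ℕ) : (-1 : R) ^ (a + a) = 1 := by rw [← two_mul, pow_mul, neg_one_sq, one_pow]
  have hodd : (-1 : R) ^ (m + 1 + m) = -1 := Odd.neg_one_pow ⟨m, by ring⟩
  simp only [Fin.isValue, finSumFinEquiv_apply_right, Function.comp_apply, submatrix_apply, hinl,
    h0, h1, adjugate_fin_succ_eq_det_submatrix, Fin.succAbove_last, Fin.val_castSucc,
    Fin.val_last, heven, add_comm m (m + 1), hodd, Fintype.card_fin] at h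
  linear_combination -h

theorem det_submatrix_snoc_snoc_mul_det_submatrix {α β : Type*} (M : Matrix α β R) {m : ℕ}
    (u : Fin m → α) (v : Fin m → β) (r₀ r₁ : α) (c₀ c₁ : β) :
    (M.submatrix (Fin.snoc (Fin.snoc u r₀ : Fin (m + 1) → α) r₁)
        (Fin.snoc (Fin.snoc v c₀ : Fin (m + 1) → β) c₁)).det * (M.submatrix u v).det
      = (M.submatrix (Fin.snoc u r₀) (Fin.snoc v c₀)).det
          * (M.submatrix (Fin.snoc u r₁) (Fin.snoc v c₁)).det
        - (M.submatrix (Fin.snoc u r₀) (Fin.snoc v c₁)).det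
          * (M.submatrix (Fin.snoc u r₁) (Fin.snoc v c₀)).det := by
  have h := det_mul_det_submatrix_castSucc_castSucc
    (M.submatrix (Fin.snoc (Fin.snoc u r₀ : Fin (m + 1) → α) r₁)
      (Fin.snoc (Fin.snoc v c₀ : Fin (m + 1) → β) c₁))
  simpa only [submatrix_submatrix, ← Function.comp_assoc, Fin.snoc_comp_castSucc,
    Fin.snoc_snoc_comp_succAbove] using h

/-- The Bareiss entry `m^{(k)}_{i+1,j+1}`, taken as the bordered minor of Sylvester's identity
(indices are `0`-based here, `1`-based in the paper). -/
def bareissEntry (A : Matrix ℕ ℕ R) (k i j : ℕ) : R :=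
  (A.submatrix (Fin.snoc (Fin.val : Fin k → ℕ) i) (Fin.snoc (Fin.val : Fin k → ℕ) j)).det

def leadingMinor (A : Matrix ℕ ℕ R) (k : ℕ) : R :=
  (A.submatrix (Fin.val : Fin k → ℕ) Fin.val).det

theorem bareissEntry_zero (A : Matrix ℕ ℕ R) (i j : ℕ) : bareissEntry A 0 i j = A i j := by
  simp [bareissEntry, Fin.snoc]

theorem bareissEntry_self (A : Matrix ℕ ℕ R) (k : ℕ) :
    bareissEntry A k k k = leadingMinor A (k + 1) := by
  rw [bareissEntry, leadingMinor, Fin.snoc_val_self]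

theorem leadingMinor_zero (A : Matrix ℕ ℕ R) : leadingMinor A 0 = 1 :=
  det_isEmpty

theorem leadingMinor_mul_bareissEntry_succ (A : Matrix ℕ ℕ R) (k i j : ℕ) :
    leadingMinor A k * bareissEntry A (k + 1) i j
      = bareissEntry A k k k * bareissEntry A k i j
        - bareissEntry A k i k * bareissEntry A k k j := by
  unfold bareissEntry leadingMinor
  rw [← Fin.snoc_val_self k]
  linear_combination det_submatrix_snoc_snoc_mul_det_submatrix A Fin.val Fin.val k i k j

def extendByZero {m n : ℕ} (M : Matrix (Fin m) (Fin n) R) : Matrix ℕ ℕ R :=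
  fun a b => if h : a < m ∧ b < n then M ⟨a, h.1⟩ ⟨b, h.2⟩ else 0

theorem extendByZero_apply_val {m n : ℕ} (M : Matrix (Fin m) (Fin n) R) (i : Fin m) (j : Fin n) :
    M.extendByZero i j = M i j := by
  simp [extendByZero]

theorem leadingMinor_extendByZero {n : ℕ} (M : Matrix (Fin n) (Fin n) R) :
    leadingMinor M.extendByZero n = M.det := by
  rw [leadingMinor]
  congr 1
  ext i j
  exact extendByZero_apply_val M i j

end Matrix

theorem stmt_14_general {R : Type*} [CommRing R] {n : ℕ} (hn : 1 ≤ n)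
    (M : Matrix (Fin n) (Fin n) R) :
    ∃ f : ℕ → ℕ → ℕ → R,
      (∀ i j : ℕ, ∀ hi : i < n, ∀ hj : j < n,
        f 0 (i + 1) (j + 1) = M ⟨i, hi⟩ ⟨j, hj⟩) ∧
      (∀ k i j : ℕ, 1 ≤ k → k ≤ n - 1 → k < i → i ≤ n → k < j → j ≤ n →
        ((if k = 1 then (1 : R) else f (k - 2) (k - 1) (k - 1)) ∣
            (f (k - 1) k k * f (k - 1) i j - f (k - 1) i k * f (k - 1) k j)) ∧
          (if k = 1 then (1 : R) else f (k - 2) (k - 1) (k - 1)) * f k i j =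
            f (k - 1) k k * f (k - 1) i j - f (k - 1) i k * f (k - 1) k j) ∧
      f (n - 1) n n = M.det := by
  refine ⟨fun k i j => bareissEntry M.extendByZero k (i - 1) (j - 1), fun i j hi hj => ?_,
    fun k i j hk _ _ _ _ _ => ?_, ?_⟩
  · simp only [Nat.add_sub_cancel, bareissEntry_zero]
    exact extendByZero_apply_val M ⟨i, hi⟩ ⟨j, hj⟩
  · obtain ⟨k, rfl⟩ := Nat.exists_eq_add_of_le' hk
    have hdivisor : (if k + 1 = 1 then (1 : R)
        else bareissEntry M.extendByZero (k + 1 - 2) (k + 1 - 1 - 1) (k + 1 - 1 - 1))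
          = leadingMinor M.extendByZero k := by
      cases k with
      | zero => simp [leadingMinor_zero]
      | succ k => simp [bareissEntry_self]
    beta_reduce
    rw [hdivisor, Nat.add_sub_cancel]
    have h := leadingMinor_mul_bareissEntry_succ M.extendByZero k (i - 1) (j - 1)
    exact ⟨⟨_, h.symm⟩, h⟩
  · simp only [bareissEntry_self, Nat.sub_add_cancel hn, leadingMinor_extendByZero]

/-- Bareiss algorithm: exactness of every division and correctness of the final entry.
`f k i j` represents the entry `m^{(k)}_{ij}` (with `1`-based row/column indices
`i, j ∈ {1, …, n}`), and the divisor at step `k` is `m^{(k-2)}_{k-1,k-1}`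
(interpreted as `1` when `k = 1`).  Exact division is expressed by the divisibility
claim together with the multiplicative form of the recursion. -/
theorem stmt_14 {R : Type*} [CommRing R] [IsDomain R] {n : ℕ} (hn : 1 ≤ n)
    (M : Matrix (Fin n) (Fin n) R)
    (hminors : ∀ k : ℕ, ∀ hk : k < n,
      (M.submatrix (Fin.castLE hk.le) (Fin.castLE hk.le)).det ≠ 0) :
    ∃ f : ℕ → ℕ → ℕ → R,
      (∀ i j : ℕ, ∀ hi : i < n, ∀ hj : j < n,
        f 0 (i + 1) (j + 1) = M ⟨i, hi⟩ ⟨j, hj⟩) ∧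
      (∀ k i j : ℕ, 1 ≤ k → k ≤ n - 1 → k < i → i ≤ n → k < j → j ≤ n →
        ((if k = 1 then (1 : R) else f (k - 2) (k - 1) (k - 1)) ∣
            (f (k - 1) k k * f (k - 1) i j - f (k - 1) i k * f (k - 1) k j)) ∧
          (if k = 1 then (1 : R) else f (k - 2) (k - 1) (k - 1)) * f k i j =
            f (k - 1) k k * f (k - 1) i j - f (k - 1) i k * f (k - 1) k j) ∧
      f (n - 1) n n = M.det :=
  stmt_14_general hn M
end

section
/- Sylvester's determinant identity for Bareiss: For an n × n matrix M over a commutative ring and indices i, j > k, let M_k(i, j) denote the (k+1) × (k+1) submatrix of M with rows 1, ..., k, i and columns 1, ..., k, j, and let d_k denote the determinant of the leading k × k minor of M. Then det(M_{k}(i,j)) · d_{k-1} = det(M_{k-1}(k,k)) · det(M_{k-1}(i,j)) − det(M_{k-1}(i,k)) · det(M_{k-1}(k,j)). -/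
/-- The `(k+1) × (k+1)` submatrix of `M` on rows `1, …, k, i` and columns
`1, …, k, j` (in `1`-based terms; here rows `0, …, k-1, i` in `0`-based terms). -/
def subm {R : Type*} [CommRing R] {n : ℕ} (M : Matrix (Fin n) (Fin n) R)
    (k : ℕ) (hk : k ≤ n) (i j : Fin n) : Matrix (Fin (k + 1)) (Fin (k + 1)) R :=
  M.submatrix (Fin.snoc (fun t : Fin k => Fin.castLE hk t) i)
    (Fin.snoc (fun t : Fin k => Fin.castLE hk t) j)

open Matrix

namespace SylvesterAux

/-- second-to-last index of `Fin (m+2)` -/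
def pidx (m : ℕ) : Fin (m + 2) := ⟨m, by omega⟩

lemma core_mul {R : Type*} [CommRing R] {m : ℕ} (A : Matrix (Fin (m + 2)) (Fin (m + 2)) R) :
    A.det * (A.det *
      (A.submatrix (Fin.castLE (by omega : m ≤ m + 2)) (Fin.castLE (by omega))).det) =
    A.det * (adjugate A (pidx m) (pidx m) * adjugate A (Fin.last (m + 1)) (Fin.last (m + 1)) -
      adjugate A (pidx m) (Fin.last (m + 1)) * adjugate A (Fin.last (m + 1)) (pidx m)) := by
  classical
  set e : Fin m ⊕ Fin 2 ≃ Fin (m + 2) := finSumFinEquiv with he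
  set B : Matrix (Fin m ⊕ Fin 2) (Fin m ⊕ Fin 2) R := A.submatrix e e with hB
  set G : Matrix (Fin m ⊕ Fin 2) (Fin m ⊕ Fin 2) R := adjugate B with hG
  set C : Matrix (Fin m ⊕ Fin 2) (Fin m ⊕ Fin 2) R :=
    Matrix.fromBlocks 1 (Matrix.of fun a b => G (Sum.inl a) (Sum.inr b)) 0
      (Matrix.of fun a b => G (Sum.inr a) (Sum.inr b)) with hC
  have hGB : B * G = B.det • 1 := mul_adjugate B
  have hBC : B * C = Matrix.fromBlocks (Matrix.of fun a b => B (Sum.inl a) (Sum.inl b)) 0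
      (Matrix.of fun a b => B (Sum.inr a) (Sum.inl b)) (B.det • (1 : Matrix (Fin 2) (Fin 2) R)) := by
    ext r s
    rcases s with s | s
    · rcases r with r | r <;>
        simp [hC, Matrix.mul_apply, Fintype.sum_sum_type, Matrix.one_apply]
    · have h1 : (B * C) r (Sum.inr s) = (B * G) r (Sum.inr s) := by
        simp [hC, Matrix.mul_apply, Fintype.sum_sum_type]
      rw [h1, hGB]
      rcases r with r | r <;> simp [Matrix.one_apply]
  have hdet := congrArg Matrix.det hBC
  rw [det_mul, det_fromBlocks_zero₁₂, hC, det_fromBlocks_zero₂₁, det_one, one_mul,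
    det_smul, det_one, mul_one] at hdet
  have hdB : B.det = A.det := by rw [hB]; exact det_submatrix_equiv_self e A
  have htl : (Matrix.of fun a b => B (Sum.inl a) (Sum.inl b)) =
      A.submatrix (Fin.castLE (by omega : m ≤ m + 2)) (Fin.castLE (by omega)) := by
    ext a b
    simp only [hB, Matrix.of_apply, submatrix_apply]
    congr 1
  have hGA : ∀ a b : Fin 2, G (Sum.inr a) (Sum.inr b) =
      adjugate A (e (Sum.inr a)) (e (Sum.inr b)) := by
    intro a b
    rw [hG, hB, adjugate_submatrix_equiv_self]
    simp
  have he0 : e (Sum.inr 0) = pidx m := Fin.ext (by simp [he, pidx])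
  have he1 : e (Sum.inr 1) = Fin.last (m + 1) := Fin.ext (by simp [he, Fin.last])
  have hdG : (Matrix.of fun a b => G (Sum.inr a) (Sum.inr b) :
      Matrix (Fin 2) (Fin 2) R).det =
      adjugate A (pidx m) (pidx m) * adjugate A (Fin.last (m + 1)) (Fin.last (m + 1)) -
        adjugate A (pidx m) (Fin.last (m + 1)) * adjugate A (Fin.last (m + 1)) (pidx m) := by
    rw [det_fin_two]
    simp only [Matrix.of_apply, hGA, he0, he1]
  rw [hdB, htl, hdG] at hdet
  rw [hdet, Fintype.card_fin]
  ring

lemma djac_adj {R : Type*} [CommRing R] {m : ℕ} (A : Matrix (Fin (m + 2)) (Fin (m + 2)) R) :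
    A.det * (A.submatrix (Fin.castLE (by omega : m ≤ m + 2)) (Fin.castLE (by omega))).det =
    adjugate A (pidx m) (pidx m) * adjugate A (Fin.last (m + 1)) (Fin.last (m + 1)) -
      adjugate A (pidx m) (Fin.last (m + 1)) * adjugate A (Fin.last (m + 1)) (pidx m) := by
  classical
  set X : Matrix (Fin (m + 2)) (Fin (m + 2)) (MvPolynomial (Fin (m + 2) × Fin (m + 2)) ℤ) :=
    mvPolynomialX (Fin (m + 2)) (Fin (m + 2)) ℤ with hXdef
  have hX : X.det * (X.submatrix (Fin.castLE (by omega : m ≤ m + 2))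
        (Fin.castLE (by omega))).det =
      adjugate X (pidx m) (pidx m) * adjugate X (Fin.last (m + 1)) (Fin.last (m + 1)) -
        adjugate X (pidx m) (Fin.last (m + 1)) * adjugate X (Fin.last (m + 1)) (pidx m) :=
    mul_left_cancel₀ (det_mvPolynomialX_ne_zero _ _) (core_mul X)
  set φ : MvPolynomial (Fin (m + 2) × Fin (m + 2)) ℤ →+* R :=
    MvPolynomial.eval₂Hom (Int.castRingHom R) (fun p => A p.1 p.2) with hφ
  have hmap : X.map φ = A := by
    rw [hXdef, hφ, MvPolynomial.coe_eval₂Hom]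
    exact mvPolynomialX_map_eval₂ _ A
  have := congrArg φ hX
  rw [_root_.map_mul, _root_.map_sub, _root_.map_mul, _root_.map_mul] at this
  have hadj : ∀ i j, φ (X.adjugate i j) = A.adjugate i j := by
    intro i j
    have h := congrFun (congrFun (RingHom.map_adjugate φ X) i) j
    simpa [RingHom.mapMatrix_apply, hmap] using h
  simp only [RingHom.map_det, RingHom.mapMatrix_apply, ← submatrix_map, hmap, hadj] at this
  exact this

lemma djac {R : Type*} [CommRing R] {m : ℕ} (A : Matrix (Fin (m + 2)) (Fin (m + 2)) R) :
    A.det * (A.submatrix (Fin.castLE (by omega : m ≤ m + 2)) (Fin.castLE (by omega))).det =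
    (A.submatrix (pidx m).succAbove (pidx m).succAbove).det *
        (A.submatrix Fin.castSucc Fin.castSucc).det -
      (A.submatrix Fin.castSucc (pidx m).succAbove).det *
        (A.submatrix (pidx m).succAbove Fin.castSucc).det := by
  have h := djac_adj A
  rw [adjugate_fin_succ_eq_det_submatrix, adjugate_fin_succ_eq_det_submatrix,
    adjugate_fin_succ_eq_det_submatrix, adjugate_fin_succ_eq_det_submatrix] at h
  simp only [Fin.succAbove_last, Fin.val_last, pidx] at h
  rw [h]
  have e1 : ((-1 : R)) ^ (m + m) = 1 := Even.neg_one_pow ⟨m, rfl⟩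
  have e2 : ((-1 : R)) ^ (m + 1 + (m + 1)) = 1 := Even.neg_one_pow ⟨m + 1, rfl⟩
  have e3 : ((-1 : R)) ^ (m + 1 + m) = -1 := Odd.neg_one_pow ⟨m, by ring⟩
  have e4 : ((-1 : R)) ^ (m + (m + 1)) = -1 := Odd.neg_one_pow ⟨m, by ring⟩
  rw [e1, e2, e3, e4]
  simp only [pidx]
  ring

end SylvesterAux

open SylvesterAux in
theorem sylvester_aux {R : Type*} [CommRing R] {n m : ℕ} (M : Matrix (Fin n) (Fin n) R)
    (hk : m + 1 ≤ n) (i j : Fin n) :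
    (subm M (m + 1) hk i j).det *
        (M.submatrix (Fin.castLE (by omega : m ≤ n)) (Fin.castLE (by omega))).det =
      (subm M m (by omega) ⟨m, by omega⟩ ⟨m, by omega⟩).det * (subm M m (by omega) i j).det -
        (subm M m (by omega) i ⟨m, by omega⟩).det * (subm M m (by omega) ⟨m, by omega⟩ j).det := by
  have hm : m ≤ n := by omega
  have hmn : m < n := by omega
  set A : Matrix (Fin (m + 2)) (Fin (m + 2)) R := subm M (m + 1) hk i j with hA
  have key1 : ∀ (x : Fin n) (t : Fin (m + 1)),
      (Fin.snoc (fun t : Fin (m + 1) => Fin.castLE hk t) x : Fin (m + 2) → Fin n)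
          (Fin.castSucc t) =
        (Fin.snoc (fun t : Fin m => Fin.castLE hm t) (⟨m, hmn⟩ : Fin n) :
          Fin (m + 1) → Fin n) t := by
    intro x t
    rw [Fin.snoc_castSucc]
    rcases t with ⟨tv, ht⟩
    by_cases h : tv < m
    · rw [show (⟨tv, ht⟩ : Fin (m + 1)) = Fin.castSucc ⟨tv, h⟩ from rfl, Fin.snoc_castSucc]
      exact Fin.ext rfl
    · have htv : tv = m := by omega
      subst htv
      rw [show (⟨tv, ht⟩ : Fin (tv + 1)) = Fin.last tv from rfl, Fin.snoc_last]
      exact Fin.ext rfl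
  have key2 : ∀ (x : Fin n) (t : Fin (m + 1)),
      (Fin.snoc (fun t : Fin (m + 1) => Fin.castLE hk t) x : Fin (m + 2) → Fin n)
          ((pidx m).succAbove t) =
        (Fin.snoc (fun t : Fin m => Fin.castLE hm t) x : Fin (m + 1) → Fin n) t := by
    intro x t
    by_cases h : t.val < m
    · have h1 : (pidx m).succAbove t = Fin.castSucc t :=
        Fin.succAbove_of_castSucc_lt _ _ (by simp [pidx, Fin.lt_def, h])
      rw [h1, Fin.snoc_castSucc,
        show t = Fin.castSucc (⟨t.val, h⟩ : Fin m) from Fin.ext rfl, Fin.snoc_castSucc]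
      exact Fin.ext rfl
    · have ht : t = Fin.last m := Fin.ext (by simp only [Fin.val_last]; omega)
      subst ht
      have h1 : (pidx m).succAbove (Fin.last m) = Fin.last (m + 1) := by
        rw [Fin.succAbove_of_le_castSucc _ _ (by simp [pidx, Fin.le_def])]
        exact Fin.ext rfl
      rw [h1, Fin.snoc_last, Fin.snoc_last]
  have key3 : ∀ (x : Fin n) (t : Fin m),
      (Fin.snoc (fun t : Fin (m + 1) => Fin.castLE hk t) x : Fin (m + 2) → Fin n)
          (Fin.castLE (by omega : m ≤ m + 2) t) =
        Fin.castLE hm t := by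
    intro x t
    rw [show Fin.castLE (by omega : m ≤ m + 2) t =
        Fin.castSucc (Fin.castLE (by omega : m ≤ m + 1) t) from Fin.ext rfl, Fin.snoc_castSucc]
    exact Fin.ext rfl
  have h := djac A
  have e0 : A.submatrix (Fin.castLE (by omega : m ≤ m + 2)) (Fin.castLE (by omega)) =
      M.submatrix (Fin.castLE hm) (Fin.castLE hm) := by
    ext t s
    simp only [hA, subm, submatrix_apply]
    rw [key3, key3]
  have e1 : A.submatrix Fin.castSucc Fin.castSucc =
      subm M m hm (⟨m, hmn⟩ : Fin n) (⟨m, hmn⟩ : Fin n) := by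
    ext t s
    simp only [hA, subm, submatrix_apply]
    rw [key1, key1]
  have e2 : A.submatrix (pidx m).succAbove (pidx m).succAbove = subm M m hm i j := by
    ext t s
    simp only [hA, subm, submatrix_apply]
    rw [key2, key2]
  have e3 : A.submatrix (pidx m).succAbove Fin.castSucc =
      subm M m hm i (⟨m, hmn⟩ : Fin n) := by
    ext t s
    simp only [hA, subm, submatrix_apply]
    rw [key2, key1]
  have e4 : A.submatrix Fin.castSucc (pidx m).succAbove =
      subm M m hm (⟨m, hmn⟩ : Fin n) j := by
    ext t s
    simp only [hA, subm, submatrix_apply]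
    rw [key1, key2]
  rw [e0, e1, e2, e3, e4] at h
  rw [h]
  ring

/-- Sylvester's determinant identity underlying the Bareiss algorithm
(`k` is `1`-based, `1 ≤ k ≤ n`; `i, j` exceed `k` in `1`-based terms). -/
theorem stmt_15 {R : Type*} [CommRing R] {n : ℕ} (M : Matrix (Fin n) (Fin n) R)
    (k : ℕ) (hk1 : 1 ≤ k) (hk : k ≤ n) (i j : Fin n)
    (hi : k ≤ (i : ℕ)) (hj : k ≤ (j : ℕ)) :
    (subm M k hk i j).det *
        (M.submatrix (Fin.castLE (show k - 1 ≤ n by omega))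
          (Fin.castLE (show k - 1 ≤ n by omega))).det =
      (subm M (k - 1) (by omega) ⟨k - 1, by omega⟩ ⟨k - 1, by omega⟩).det *
          (subm M (k - 1) (by omega) i j).det -
        (subm M (k - 1) (by omega) i ⟨k - 1, by omega⟩).det *
          (subm M (k - 1) (by omega) ⟨k - 1, by omega⟩ j).det := by
  obtain ⟨m, rfl⟩ : ∃ m, k = m + 1 := ⟨k - 1, by omega⟩
  exact sylvester_aux M hk i j
end

section
/- In the 3-SAT reduction, the map from a 3-CNF formula with n variables and m clauses to the 2-IEV instance (matrices C_1, ..., C_{m+1} over GF(2) with N = n+1 columns, where C_i spans the orthogonal complement of the row space of B_i) preserves and reflects solutions: the formula is satisfiable iff there exists v ∈ GF(2)^{n+1} not in the row space of any C_i. -/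
/-- The row space of the `i`-th clause matrix (for `i ≤ m-1`), or of `B_{m+1}` (for `i = m`). -/
def Bspan {n m : ℕ} (φ : Fin m → Fin 3 → Lit n) (i : Fin (m + 1)) :
    Submodule (ZMod 2) (Fin (n + 1) → ZMod 2) :=
  if h : (i : ℕ) < m then Submodule.span (ZMod 2) (Set.range (clauseMatrix (φ ⟨i, h⟩)))
  else Submodule.span (ZMod 2) (Set.range (lastMatrix n))


/-! A vector `v` avoids the row space of `C_i` iff `B_i v ≠ 0`. For `B_{m+1}` this says
`v_{n+1} = 1`; given that, the rows `e_k` and `e_k + e_{n+1}` of a clause matrix pair with `v` to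
`v_k` and `v_k + 1`, which are nonzero exactly when the literals `x_k`, `¬x_k` hold under
`x_k := v_k`. So the vectors avoiding every row space are the vectors `(a, 1)` with `a` a
satisfying assignment. -/

open Matrix

lemma forall_mem_span_range_dotProduct_eq_zero_iff {R ι κ : Type*} [CommSemiring R] [Fintype κ]
    (M : Matrix ι κ R) (v : κ → R) :
    (∀ w ∈ Submodule.span R (Set.range M), v ⬝ᵥ w = 0) ↔ M *ᵥ v = 0 := by
  calc (∀ w ∈ Submodule.span R (Set.range M), v ⬝ᵥ w = 0)
      ↔ Submodule.span R (Set.range M) ≤ LinearMap.ker (dotProductBilin R R v) := Iff.rfl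
    _ ↔ ∀ i, v ⬝ᵥ M i = 0 := Submodule.span_le.trans Set.range_subset_iff
    _ ↔ M *ᵥ v = 0 := by simp only [funext_iff, mulVec, dotProduct_comm v]; rfl

lemma ZMod.ne_zero_iff_eq_one (x : ZMod 2) : x ≠ 0 ↔ x = 1 := by
  revert x; decide

lemma Bspan_castSucc {n m : ℕ} (φ : Fin m → Fin 3 → Lit n) (i : Fin m) :
    Bspan φ i.castSucc = Submodule.span (ZMod 2) (Set.range (clauseMatrix (φ i))) :=
  dif_pos i.isLt

lemma Bspan_last {n m : ℕ} (φ : Fin m → Fin 3 → Lit n) :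
    Bspan φ (Fin.last m) = Submodule.span (ZMod 2) (Set.range (lastMatrix n)) :=
  dif_neg (lt_irrefl m)

lemma litRow_dotProduct {n : ℕ} (l : Lit n) (v : Fin (n + 1) → ZMod 2) :
    litRow l ⬝ᵥ v = v l.var.castSucc + if l.neg then v (Fin.last n) else 0 := by
  cases h : l.neg <;> simp [litRow, dotProduct, add_mul, Finset.sum_add_distrib, h]

lemma clauseMatrix_mulVec_ne_zero_iff {n : ℕ} (cl : Fin 3 → Lit n)
    (v : Fin (n + 1) → ZMod 2) :
    clauseMatrix cl *ᵥ v ≠ 0 ↔ ∃ j, litRow (cl j) ⬝ᵥ v ≠ 0 :=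
  Function.ne_iff

lemma lastMatrix_mulVec_ne_zero_iff {n : ℕ} (v : Fin (n + 1) → ZMod 2) :
    lastMatrix n *ᵥ v ≠ 0 ↔ v (Fin.last n) = 1 := by
  simp [funext_iff, lastMatrix, mulVec, dotProduct, ite_mul, ZMod.ne_zero_iff_eq_one]

def assignmentOfVec {n : ℕ} (v : Fin (n + 1) → ZMod 2) : Fin n → Bool :=
  fun k => v k.castSucc = 1

def vecOfAssignment {n : ℕ} (a : Fin n → Bool) : Fin (n + 1) → ZMod 2 :=
  Fin.snoc (fun k => if a k then 1 else 0) 1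

lemma vecOfAssignment_last {n : ℕ} (a : Fin n → Bool) : vecOfAssignment a (Fin.last n) = 1 :=
  Fin.snoc_last ..

lemma assignmentOfVec_vecOfAssignment {n : ℕ} (a : Fin n → Bool) :
    assignmentOfVec (vecOfAssignment a) = a := by
  funext k
  cases h : a k <;> simp [assignmentOfVec, vecOfAssignment, h]

lemma litRow_dotProduct_ne_zero_iff {n : ℕ} (l : Lit n) {v : Fin (n + 1) → ZMod 2}
    (hv : v (Fin.last n) = 1) : litRow l ⬝ᵥ v ≠ 0 ↔ litSat (assignmentOfVec v) l := by
  rw [litRow_dotProduct, hv, litSat, assignmentOfVec]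
  generalize v l.var.castSucc = x
  cases l.neg <;> revert x <;> decide

theorem stmt_19 {n m : ℕ} (φ : Fin m → Fin 3 → Lit n) (p : Fin (m + 1) → ℕ)
    (C : (i : Fin (m + 1)) → Matrix (Fin (p i)) (Fin (n + 1)) (ZMod 2))
    (hC : ∀ i (u : Fin (n + 1) → ZMod 2),
      u ∈ Submodule.span (ZMod 2) (Set.range (C i)) ↔
        ∀ w ∈ Bspan φ i, dotProduct u w = 0) :
    (∃ a : Fin n → Bool, ∀ i, ∃ j, litSat a (φ i j)) ↔
    (∃ v : Fin (n + 1) → ZMod 2, ∀ i, v ∉ Submodule.span (ZMod 2) (Set.range (C i))) := by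
  simp only [hC, forall_mem_span_range_dotProduct_eq_zero_iff, Fin.forall_fin_succ',
    Bspan_castSucc, Bspan_last, ← ne_eq, clauseMatrix_mulVec_ne_zero_iff,
    lastMatrix_mulVec_ne_zero_iff]
  constructor
  · rintro ⟨a, ha⟩
    refine ⟨vecOfAssignment a, fun i => ?_, vecOfAssignment_last a⟩
    simpa only [litRow_dotProduct_ne_zero_iff _ (vecOfAssignment_last a),
      assignmentOfVec_vecOfAssignment] using ha i
  · rintro ⟨v, hv, hlast⟩
    exact ⟨assignmentOfVec v, by simpa only [litRow_dotProduct_ne_zero_iff _ hlast] using hv⟩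
end
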